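/- Let D ∈ ℝ^{n×n} and η > 0, and suppose D = U·S·Vᵀ where U, V ∈ ℝ^{n×n} are orthogonal matrices and S ∈ ℝ^{n×n} is diagonal with nonnegative diagonal entries. Define the nuclear norm of a matrix L ∈ ℝ^{n×n} by ‖L‖_* = trace((Lᵀ·L)^{1/2}), where (Lᵀ·L)^{1/2} is the positive semidefinite square root of the positive semidefinite matrix Lᵀ·L. Let S_η be the diagonal matrix with diagonal entries max(S_{ii} − 1/η, 0), and set L* = U·S_η·Vᵀ. Then L* minimizes the function L ↦ ‖L‖_* + (η/2)·‖L − D‖_F² over all L ∈ ℝ^{n×n}. -/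

import Mathlib

/-! Conjugating by the orthogonal factors preserves both the nuclear norm and the Frobenius
norm, so one may assume `D = S` is diagonal. For any `M`, the nuclear norm dominates
`∑ |M i i|` (trace ≤ nuclear norm, applied to `M` times a diagonal sign matrix), and
`‖M - S‖_F²` dominates `∑ (M i i - S i i)²`. The objective at `M` is therefore at least a
separable sum of scalar problems `|x| + η/2 (x - S i i)²`, each minimized by soft thresholding
`S i i` at level `1/η`, and the diagonal soft-thresholded matrix attains that sum. -/

open Matrix Finset

/-- The squared Frobenius norm of a matrix. -/
def frobSq {n : ℕ} (Q : Matrix (Fin n) (Fin n) ℝ) : ℝ :=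
  ∑ i, ∑ j, (Q i j) ^ 2

/-- `Lᵀ·L` is positive semidefinite. -/
theorem transpose_mul_self_posSemidef {n : ℕ} (L : Matrix (Fin n) (Fin n) ℝ) :
    (Lᵀ * L).PosSemidef := by
  have h := Matrix.posSemidef_conjTranspose_mul_self L
  simpa [Matrix.conjTranspose_eq_transpose_of_trivial] using h

open scoped ComplexOrder in
/-- The positive semidefinite square root, as `Matrix.PosSemidef.sqrt` was defined in the
older Mathlib (it has since been removed). -/
noncomputable def Matrix.PosSemidef.sqrt {m : Type*} [Fintype m] [DecidableEq m] {𝕜 : Type*}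
    [RCLike 𝕜] {A : Matrix m m 𝕜} (hA : A.PosSemidef) : Matrix m m 𝕜 :=
  hA.1.eigenvectorUnitary.1 * diagonal ((↑) ∘ Real.sqrt ∘ hA.1.eigenvalues) *
    (star hA.1.eigenvectorUnitary : Matrix m m 𝕜)

/-- The nuclear norm of a real square matrix: `‖L‖_* = trace((Lᵀ·L)^{1/2})`,
where `(Lᵀ·L)^{1/2}` is the positive semidefinite square root. -/
noncomputable def nuclearNorm {n : ℕ} (L : Matrix (Fin n) (Fin n) ℝ) : ℝ :=
  ((transpose_mul_self_posSemidef L).sqrt).trace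

open scoped MatrixOrder

namespace Matrix

variable {m : Type*} [Fintype m] [DecidableEq m]

namespace PosSemidef

theorem sqrt_eq_cfcSqrt {B : Matrix m m ℝ} (hB : B.PosSemidef) : hB.sqrt = CFC.sqrt B := by
  rw [CFC.sqrt_eq_real_sqrt B hB.nonneg, cfcₙ_eq_cfc (hf0 := Real.sqrt_zero),
    hB.1.cfc_eq, IsHermitian.cfc, Unitary.conjStarAlgAut_apply]
  rfl

theorem posSemidef_sqrt {B : Matrix m m ℝ} (hB : B.PosSemidef) : hB.sqrt.PosSemidef := by
  rw [hB.sqrt_eq_cfcSqrt]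
  exact nonneg_iff_posSemidef.mp (CFC.sqrt_nonneg B)

theorem sqrt_mul_self {B : Matrix m m ℝ} (hB : B.PosSemidef) : hB.sqrt * hB.sqrt = B := by
  rw [hB.sqrt_eq_cfcSqrt]
  exact CFC.sqrt_mul_sqrt_self B hB.nonneg

theorem eq_sqrt_of_mul_self_eq {A B : Matrix m m ℝ} (hA : A.PosSemidef) (hB : B.PosSemidef)
    (h : A * A = B) : A = hB.sqrt := by
  rw [hB.sqrt_eq_cfcSqrt, CFC.sqrt_unique h hA.nonneg]

open scoped ComplexOrder in
theorem trace_sqrt {𝕜 : Type*} [RCLike 𝕜] {B : Matrix m m 𝕜} (hB : B.PosSemidef) :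
    hB.sqrt.trace = ∑ i, (√(hB.1.eigenvalues i) : 𝕜) := by
  rw [sqrt, trace_mul_cycle, Unitary.coe_star_mul_self, one_mul, trace_diagonal]
  rfl

end PosSemidef

theorem IsHermitian.transpose_eigenvectorUnitary_mul_mul {B : Matrix m m ℝ} (hB : B.IsHermitian) :
    (hB.eigenvectorUnitary : Matrix m m ℝ)ᵀ * B * hB.eigenvectorUnitary =
      diagonal hB.eigenvalues := by
  have := hB.conjStarAlgAut_star_eigenvectorUnitary
  rw [Unitary.conjStarAlgAut_star_apply] at this
  simpa [star_eq_conjTranspose] using this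

omit [DecidableEq m] in
theorem transpose_mul_apply_self (B C : Matrix m m ℝ) (k : m) :
    (Bᵀ * C) k k = ∑ i, B i k * C i k := by
  simp [mul_apply]

theorem transpose_mul_self_mul_mul_transpose {U V A : Matrix m m ℝ} (hU : Uᵀ * U = 1) :
    (U * A * Vᵀ)ᵀ * (U * A * Vᵀ) = V * (Aᵀ * A) * Vᵀ := by
  simp only [transpose_mul, transpose_transpose, Matrix.mul_assoc]
  rw [← Matrix.mul_assoc Uᵀ, hU, Matrix.one_mul]

-- Cauchy–Schwarz on each diagonal entry of `Wᵀ A W`: `⟪w_k, A w_k⟫ ≤ ‖w_k‖ ‖A w_k‖ = √(μ k)`.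
theorem trace_le_sum_sqrt {A W : Matrix m m ℝ} {μ : m → ℝ} (hW : Wᵀ * W = 1)
    (hAW : Wᵀ * (Aᵀ * A) * W = diagonal μ) : A.trace ≤ ∑ k, √(μ k) := by
  have hcol_sq (B : Matrix m m ℝ) (k : m) : ∑ i, B i k ^ 2 = (Bᵀ * B) k k := by
    simp only [transpose_mul_apply_self, sq]
  have hdiag (k : m) : (Wᵀ * A * W) k k ≤ √(μ k) := calc
      (Wᵀ * A * W) k k = ∑ i, W i k * (A * W) i k := by
        rw [Matrix.mul_assoc, transpose_mul_apply_self]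
      _ ≤ √(∑ i, W i k ^ 2) * √(∑ i, (A * W) i k ^ 2) := Real.sum_mul_le_sqrt_mul_sqrt _ _ _
      _ = √(μ k) := by
        rw [hcol_sq, hcol_sq, hW, transpose_mul, Matrix.mul_assoc, ← Matrix.mul_assoc Aᵀ,
          ← Matrix.mul_assoc, hAW]
        simp
  calc A.trace = (Wᵀ * A * W).trace := by rw [trace_mul_cycle, mul_eq_one_comm.mp hW, one_mul]
    _ ≤ ∑ k, √(μ k) := Finset.sum_le_sum fun k _ => hdiag k

end Matrix

section NuclearNorm

variable {n : ℕ}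

theorem nuclearNorm_eq_trace_of_mul_self_eq {L P : Matrix (Fin n) (Fin n) ℝ}
    (hP : P.PosSemidef) (h : P * P = Lᵀ * L) : nuclearNorm L = P.trace := by
  rw [nuclearNorm, ← hP.eq_sqrt_of_mul_self_eq _ h]

theorem nuclearNorm_mul_mul_transpose {U V : Matrix (Fin n) (Fin n) ℝ} (hU : U * Uᵀ = 1)
    (hV : V * Vᵀ = 1) (A : Matrix (Fin n) (Fin n) ℝ) :
    nuclearNorm (U * A * Vᵀ) = nuclearNorm A := by
  have hA := transpose_mul_self_posSemidef A
  have hV' : Vᵀ * V = 1 := mul_eq_one_comm.mp hV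
  have hP : (V * hA.sqrt * Vᵀ).PosSemidef := by
    simpa [conjTranspose_eq_transpose_of_trivial] using
      hA.posSemidef_sqrt.mul_mul_conjTranspose_same V
  have hPP : V * hA.sqrt * Vᵀ * (V * hA.sqrt * Vᵀ) = (U * A * Vᵀ)ᵀ * (U * A * Vᵀ) := by
    rw [transpose_mul_self_mul_mul_transpose (mul_eq_one_comm.mp hU)]
    simp only [Matrix.mul_assoc]
    rw [← Matrix.mul_assoc Vᵀ, hV', Matrix.one_mul, ← Matrix.mul_assoc hA.sqrt,
      hA.sqrt_mul_self, Matrix.mul_assoc]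
  rw [nuclearNorm_eq_trace_of_mul_self_eq hP hPP, trace_mul_cycle, hV', Matrix.one_mul,
    nuclearNorm]

theorem nuclearNorm_diagonal {d : Fin n → ℝ} (hd : ∀ i, 0 ≤ d i) :
    nuclearNorm (diagonal d) = ∑ i, d i := by
  rw [nuclearNorm_eq_trace_of_mul_self_eq (posSemidef_diagonal_iff.mpr hd)
    (by rw [diagonal_transpose]), trace_diagonal]

theorem trace_le_nuclearNorm (A : Matrix (Fin n) (Fin n) ℝ) : A.trace ≤ nuclearNorm A := by
  have hA := transpose_mul_self_posSemidef A
  have hW : (hA.1.eigenvectorUnitary : Matrix (Fin n) (Fin n) ℝ)ᵀ *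
      hA.1.eigenvectorUnitary = 1 := by
    simpa [star_eq_conjTranspose] using Unitary.coe_star_mul_self hA.1.eigenvectorUnitary
  rw [nuclearNorm, hA.trace_sqrt]
  exact trace_le_sum_sqrt hW hA.1.transpose_eigenvectorUnitary_mul_mul

theorem sum_abs_diag_le_nuclearNorm (M : Matrix (Fin n) (Fin n) ℝ) :
    ∑ i, |M i i| ≤ nuclearNorm M := by
  set E : Matrix (Fin n) (Fin n) ℝ := diagonal fun i => if 0 ≤ M i i then 1 else -1
  have hE : E * Eᵀ = 1 := by
    rw [diagonal_transpose, diagonal_mul_diagonal, ← diagonal_one]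
    congr 1
    ext i
    split_ifs <;> norm_num
  have htrace : (1 * M * Eᵀ).trace = ∑ i, |M i i| := by
    rw [Matrix.one_mul, diagonal_transpose, trace]
    refine Finset.sum_congr rfl fun i _ => ?_
    rw [diag_apply, mul_diagonal]
    split_ifs with h
    · rw [mul_one, abs_of_nonneg h]
    · rw [mul_neg_one, abs_of_neg (not_le.mp h)]
  calc ∑ i, |M i i| = (1 * M * Eᵀ).trace := htrace.symm
    _ ≤ nuclearNorm (1 * M * Eᵀ) := trace_le_nuclearNorm _
    _ = nuclearNorm M := nuclearNorm_mul_mul_transpose (by simp) hE M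

end NuclearNorm

section FrobSq

variable {n : ℕ}

theorem frobSq_eq_trace (Q : Matrix (Fin n) (Fin n) ℝ) : frobSq Q = (Qᵀ * Q).trace := by
  simp only [frobSq, trace, diag_apply, transpose_mul_apply_self, sq]
  exact Finset.sum_comm

theorem frobSq_mul_mul_transpose {U V : Matrix (Fin n) (Fin n) ℝ} (hU : U * Uᵀ = 1)
    (hV : V * Vᵀ = 1) (Q : Matrix (Fin n) (Fin n) ℝ) : frobSq (U * Q * Vᵀ) = frobSq Q := by
  rw [frobSq_eq_trace, frobSq_eq_trace, transpose_mul_self_mul_mul_transpose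
    (mul_eq_one_comm.mp hU), trace_mul_cycle, ← Matrix.mul_assoc, mul_eq_one_comm.mp hV,
    Matrix.one_mul]

theorem frobSq_diagonal (d : Fin n → ℝ) : frobSq (diagonal d) = ∑ i, d i ^ 2 := by
  refine Finset.sum_congr rfl fun i _ => ?_
  rw [Finset.sum_eq_single i (fun _ _ hji => by simp [diagonal_apply_ne _ hji.symm]) (by simp),
    diagonal_apply_eq]

theorem sum_sq_diag_le_frobSq (Q : Matrix (Fin n) (Fin n) ℝ) : ∑ i, Q i i ^ 2 ≤ frobSq Q :=
  Finset.sum_le_sum fun i _ =>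
    Finset.single_le_sum (f := fun j => Q i j ^ 2) (fun _ _ => sq_nonneg _) (Finset.mem_univ i)

end FrobSq

def softThreshold (τ x : ℝ) : ℝ := max (x - τ) 0

theorem softThreshold_add_sq_le {η s : ℝ} (hη : 0 < η) (hs : 0 ≤ s) (x : ℝ) :
    softThreshold (1 / η) s + η / 2 * (softThreshold (1 / η) s - s) ^ 2 ≤
      |x| + η / 2 * (x - s) ^ 2 := by
  rcases le_total s (1 / η) with hle | hge
  · have hηs : η * s ≤ 1 := by rwa [le_div_iff₀' hη] at hle
    have : η * s * x ≤ |x| := calc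
      η * s * x ≤ η * s * |x| := mul_le_mul_of_nonneg_left (le_abs_self x) (by positivity)
      _ ≤ |x| := mul_le_of_le_one_left (abs_nonneg x) hηs
    rw [softThreshold, max_eq_right (by linarith)]
    nlinarith [mul_nonneg hη.le (sq_nonneg x)]
  · have hsq : η / 2 * (x - s) ^ 2 =
        η / 2 * (x - (s - 1 / η)) ^ 2 - (x - (s - 1 / η)) + 1 / (2 * η) := by
      field_simp
      ring
    have hcenter : η / 2 * (s - 1 / η - s) ^ 2 = 1 / (2 * η) := by
      field_simp
      ring
    rw [softThreshold, max_eq_left (by linarith), hsq, hcenter]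
    linarith [le_abs_self x, mul_nonneg hη.le (sq_nonneg (x - (s - 1 / η)))]

theorem nuclearNorm_add_frobSq_diagonal_softThreshold_le {n : ℕ} {η : ℝ} (hη : 0 < η)
    {S : Matrix (Fin n) (Fin n) ℝ} (hS : S.IsDiag) (hS_nonneg : ∀ i, 0 ≤ S i i)
    (M : Matrix (Fin n) (Fin n) ℝ) :
    nuclearNorm (diagonal fun i => softThreshold (1 / η) (S i i)) +
        η / 2 * frobSq ((diagonal fun i => softThreshold (1 / η) (S i i)) - S) ≤
      nuclearNorm M + η / 2 * frobSq (M - S) := by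
  have hdiff : ((diagonal fun i => softThreshold (1 / η) (S i i)) - S) =
      diagonal fun i => softThreshold (1 / η) (S i i) - S i i := by
    conv_lhs => arg 2; rw [← hS.diagonal_diag]
    exact diagonal_sub _ _
  calc nuclearNorm (diagonal fun i => softThreshold (1 / η) (S i i)) +
        η / 2 * frobSq ((diagonal fun i => softThreshold (1 / η) (S i i)) - S)
      = ∑ i, (softThreshold (1 / η) (S i i) +
          η / 2 * (softThreshold (1 / η) (S i i) - S i i) ^ 2) := by
        have ht : ∀ i, 0 ≤ softThreshold (1 / η) (S i i) := fun _ => le_max_right _ _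
        rw [nuclearNorm_diagonal ht, hdiff, frobSq_diagonal, Finset.mul_sum,
          Finset.sum_add_distrib]
    _ ≤ ∑ i, (|M i i| + η / 2 * (M i i - S i i) ^ 2) :=
        Finset.sum_le_sum fun i _ => softThreshold_add_sq_le hη (hS_nonneg i) (M i i)
    _ = ∑ i, |M i i| + η / 2 * ∑ i, (M - S) i i ^ 2 := by
        rw [Finset.sum_add_distrib, Finset.mul_sum]
        rfl
    _ ≤ nuclearNorm M + η / 2 * frobSq (M - S) := by
        gcongr
        · exact sum_abs_diag_le_nuclearNorm M
        · exact sum_sq_diag_le_frobSq (M - S)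

/-- Singular value thresholding: if `D = U·S·Vᵀ` with `U, V` orthogonal and `S`
diagonal with nonnegative entries, then `L* = U·S_η·Vᵀ`, where `S_η` has
diagonal entries `max(S_ii − 1/η, 0)`, minimizes
`L ↦ ‖L‖_* + (η/2)·‖L − D‖_F²`. -/
theorem singular_value_thresholding (n : ℕ) (D U S V : Matrix (Fin n) (Fin n) ℝ)
    (η : ℝ) (hη : 0 < η)
    (hU : U * Uᵀ = 1) (hV : V * Vᵀ = 1)
    (hSdiag : ∀ i j, i ≠ j → S i j = 0) (hSnonneg : ∀ i, 0 ≤ S i i)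
    (hSVD : D = U * S * Vᵀ) :
    let Sη : Matrix (Fin n) (Fin n) ℝ := Matrix.diagonal fun i => max (S i i - 1 / η) 0
    let Lstar : Matrix (Fin n) (Fin n) ℝ := U * Sη * Vᵀ
    ∀ L : Matrix (Fin n) (Fin n) ℝ,
      nuclearNorm Lstar + (η / 2) * frobSq (Lstar - D) ≤
        nuclearNorm L + (η / 2) * frobSq (L - D) := by
  intro Sη Lstar L
  obtain ⟨M, rfl⟩ : ∃ M, L = U * M * Vᵀ := ⟨Uᵀ * L * V, by
    simp only [← Matrix.mul_assoc, hU, Matrix.one_mul]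
    rw [Matrix.mul_assoc, hV, Matrix.mul_one]⟩
  subst hSVD
  simp only [Lstar, ← Matrix.sub_mul, ← Matrix.mul_sub, nuclearNorm_mul_mul_transpose hU hV,
    frobSq_mul_mul_transpose hU hV]
  exact nuclearNorm_add_frobSq_diagonal_softThreshold_le hη hSdiag hSnonneg M
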